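/- arXiv:2207.09385 — 11 statements merged into one kernel-verified Lean document; each statement's English description precedes it below -/
import Mathlib

section
/- The set G_u^{(1)} := { (D, m1, m2, E) ∈ R^4 : D > 0 and E - sqrt(D^2 + m1^2 + m2^2) > 0 } is convex. -/
private lemma norm3 (x y z : ℝ) :
    ‖(EuclideanSpace.equiv (Fin 3) ℝ).symm ![x, y, z]‖ = Real.sqrt (x ^ 2 + y ^ 2 + z ^ 2) := by
  rw [EuclideanSpace.norm_eq]
  simp [Fin.sum_univ_three, Real.norm_eq_abs, sq_abs]

private lemma tri (a b d1 m11 m21 d2 m12 m22 : ℝ) (ha : 0 ≤ a) (hb : 0 ≤ b) :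
    Real.sqrt ((a * d1 + b * d2) ^ 2 + (a * m11 + b * m12) ^ 2 + (a * m21 + b * m22) ^ 2)
      ≤ a * Real.sqrt (d1 ^ 2 + m11 ^ 2 + m21 ^ 2)
        + b * Real.sqrt (d2 ^ 2 + m12 ^ 2 + m22 ^ 2) := by
  have h := norm_add_le (a • (EuclideanSpace.equiv (Fin 3) ℝ).symm ![d1, m11, m21])
    (b • (EuclideanSpace.equiv (Fin 3) ℝ).symm ![d2, m12, m22])
  have h1 : a • (EuclideanSpace.equiv (Fin 3) ℝ).symm ![d1, m11, m21]
      + b • (EuclideanSpace.equiv (Fin 3) ℝ).symm ![d2, m12, m22]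
      = (EuclideanSpace.equiv (Fin 3) ℝ).symm
          ![a * d1 + b * d2, a * m11 + b * m12, a * m21 + b * m22] := by
    apply PiLp.ext
    intro i
    fin_cases i <;> simp
  rw [h1, norm3] at h
  rw [norm_smul, norm_smul, Real.norm_eq_abs, Real.norm_eq_abs, abs_of_nonneg ha,
    abs_of_nonneg hb, norm3, norm3] at h
  exact h

/-- The admissible state set
`G_u^{(1)} = { (D, m1, m2, E) : D > 0, E - sqrt (D^2 + m1^2 + m2^2) > 0 }` is convex. -/
theorem Gu1_convex :
    Convex ℝ {U : ℝ × ℝ × ℝ × ℝ |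
      0 < U.1 ∧ 0 < U.2.2.2 - Real.sqrt (U.1 ^ 2 + U.2.1 ^ 2 + U.2.2.1 ^ 2)} := by
  rintro ⟨d1, m11, m21, e1⟩ ⟨hd1, he1⟩ ⟨d2, m12, m22, e2⟩ ⟨hd2, he2⟩ a b ha hb hab
  constructor
  · rcases eq_or_lt_of_le ha with h | h
    · simp only [← h, zero_smul, zero_add] at hab ⊢
      simpa [Prod.smul_def, hab] using hd2
    · have : 0 ≤ b * d2 := mul_nonneg hb hd2.le
      have : 0 < a * d1 := mul_pos h hd1
      simp only [Prod.smul_def, Prod.mk_add_mk, smul_eq_mul]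
      linarith
  · simp only [Prod.smul_def, Prod.mk_add_mk, smul_eq_mul, Set.mem_setOf_eq] at *
    have key := tri a b d1 m11 m21 d2 m12 m22 ha hb
    have h1 : 0 ≤ a * (e1 - Real.sqrt (d1 ^ 2 + m11 ^ 2 + m21 ^ 2)) :=
      mul_nonneg ha he1.le
    have h2 : 0 ≤ b * (e2 - Real.sqrt (d2 ^ 2 + m12 ^ 2 + m22 ^ 2)) :=
      mul_nonneg hb he2.le
    rcases lt_or_ge 0 a with h | h
    · have h1' : 0 < a * (e1 - Real.sqrt (d1 ^ 2 + m11 ^ 2 + m21 ^ 2)) := mul_pos h he1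
      nlinarith
    · have hb' : 0 < b := by linarith
      have h2' : 0 < b * (e2 - Real.sqrt (d2 ^ 2 + m12 ^ 2 + m22 ^ 2)) := mul_pos hb' he2
      nlinarith
end

section
/- The set G_u^{(1)} := { (D, m, E) ∈ R × R^2 × R : D > 0, E - sqrt(D^2 + ‖m‖^2) > 0 } coincides with the set G_u^{(2)} := { (D, m, E) : D > 0 and for all v* ∈ R^2 with ‖v*‖ < 1, E - ⟨m, v*⟩ - D·sqrt(1 - ‖v*‖^2) > 0 }. -/
open scoped RealInnerProductSpace

/-!
Both sets are cut out by `D > 0` and a lower bound on `E`; they agree because for `D > 0`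
the maximum of `⟪m, v⟫ + D √(1 - ‖v‖²)` over the open unit ball is `√(D² + ‖m‖²)`.
The bound is Cauchy–Schwarz for the pairs `(‖m‖, D)` and `(‖v‖, √(1 - ‖v‖²))`, the latter being
a unit vector, and it is attained at `v = m / √(D² + ‖m‖²)`.
-/

section

variable {F : Type*} [NormedAddCommGroup F] [InnerProductSpace ℝ F]

theorem inner_add_mul_sqrt_one_sub_norm_sq_le (m v : F) (D : ℝ) (hv : ‖v‖ ≤ 1) :
    ⟪m, v⟫ + D * √(1 - ‖v‖ ^ 2) ≤ √(D ^ 2 + ‖m‖ ^ 2) := by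
  set w := √(1 - ‖v‖ ^ 2)
  have hw : w ^ 2 = 1 - ‖v‖ ^ 2 := Real.sq_sqrt (by nlinarith [norm_nonneg v])
  have cauchy_schwarz : (‖m‖ * ‖v‖ + D * w) ^ 2 ≤ D ^ 2 + ‖m‖ ^ 2 := by
    nlinarith [sq_nonneg (‖m‖ * w - D * ‖v‖)]
  calc ⟪m, v⟫ + D * w ≤ ‖m‖ * ‖v‖ + D * w := by gcongr; exact real_inner_le_norm m v
    _ ≤ |‖m‖ * ‖v‖ + D * w| := le_abs_self _
    _ ≤ √(D ^ 2 + ‖m‖ ^ 2) := Real.abs_le_sqrt cauchy_schwarz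

theorem exists_norm_lt_one_inner_add_mul_sqrt_one_sub_norm_sq_eq (m : F) {D : ℝ} (hD : 0 < D) :
    ∃ v : F, ‖v‖ < 1 ∧ ⟪m, v⟫ + D * √(1 - ‖v‖ ^ 2) = √(D ^ 2 + ‖m‖ ^ 2) := by
  set S := √(D ^ 2 + ‖m‖ ^ 2)
  have hS : 0 < S := Real.sqrt_pos.mpr (by positivity)
  have hS2 : S ^ 2 = D ^ 2 + ‖m‖ ^ 2 := Real.sq_sqrt (by positivity)
  have hnorm : ‖S⁻¹ • m‖ = ‖m‖ / S := by
    rw [norm_smul, norm_inv, Real.norm_of_nonneg hS.le, inv_mul_eq_div]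
  have hsqrt : √(1 - ‖S⁻¹ • m‖ ^ 2) = D / S := by
    rw [hnorm, ← Real.sqrt_sq (div_pos hD hS).le]
    congr 1
    field_simp
    linarith
  refine ⟨S⁻¹ • m, ?_, ?_⟩
  · rw [hnorm, div_lt_one hS]
    nlinarith [norm_nonneg m]
  · rw [hsqrt, real_inner_smul_right, real_inner_self_eq_norm_sq]
    field_simp
    linarith

end

/-- Equivalence of the admissible state set `G_u^{(1)}` with the set `G_u^{(2)}` defined by a
family of linear constraints. Here a state is `(D, m, E) ∈ ℝ × ℝ² × ℝ`. -/
theorem Gu1_eq_Gu2 :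
    {U : ℝ × EuclideanSpace ℝ (Fin 2) × ℝ |
        0 < U.1 ∧ 0 < U.2.2 - Real.sqrt (U.1 ^ 2 + ‖U.2.1‖ ^ 2)} =
    {U : ℝ × EuclideanSpace ℝ (Fin 2) × ℝ |
        0 < U.1 ∧ ∀ v : EuclideanSpace ℝ (Fin 2), ‖v‖ < 1 →
          0 < U.2.2 - ⟪U.2.1, v⟫ - U.1 * Real.sqrt (1 - ‖v‖ ^ 2)} := by
  ext ⟨D, m, E⟩
  simp only [Set.mem_ofPred_eq, sub_pos, sub_sub]
  refine and_congr_right fun hD => ⟨fun hE v hv => ?_, fun hE => ?_⟩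
  · exact (inner_add_mul_sqrt_one_sub_norm_sq_le m v D hv.le).trans_lt hE
  · obtain ⟨v, hv, hmax⟩ := exists_norm_lt_one_inner_add_mul_sqrt_one_sub_norm_sq_eq m hD
    exact hmax ▸ hE v hv
end

section
/- Let Γ ∈ (1,2], D > 0, m ∈ R^2, and E > sqrt(D^2 + ‖m‖^2). Define Φ(p) = p/(Γ-1) - E + ‖m‖^2/(E+p) + D·sqrt(1 - ‖m‖^2/(E+p)^2) for p ∈ [0, ∞). Then Φ is continuously differentiable on [0, ∞) and Φ'(p) ≥ 1 - ‖m‖^2/(E+p)^2 > 0 for all p ≥ 0; in particular Φ is strictly increasing on [0, ∞). -/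
/-- The pressure function `Φ` is continuously differentiable on `[0, ∞)` with
`Φ'(p) ≥ 1 - ‖m‖²/(E+p)² > 0` for all `p ≥ 0`; in particular `Φ` is strictly
increasing on `[0, ∞)`. -/
theorem pressure_eq_monotone
    (Γ D E : ℝ) (m : EuclideanSpace ℝ (Fin 2))
    (hΓ1 : 1 < Γ) (hΓ2 : Γ ≤ 2) (hD : 0 < D)
    (hE : Real.sqrt (D ^ 2 + ‖m‖ ^ 2) < E)
    (Φ : ℝ → ℝ)
    (hΦ : ∀ p : ℝ, Φ p = p / (Γ - 1) - E + ‖m‖ ^ 2 / (E + p)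
      + D * Real.sqrt (1 - ‖m‖ ^ 2 / (E + p) ^ 2)) :
    ContDiffOn ℝ 1 Φ (Set.Ici 0) ∧
    (∀ p : ℝ, 0 ≤ p →
      0 < 1 - ‖m‖ ^ 2 / (E + p) ^ 2 ∧ 1 - ‖m‖ ^ 2 / (E + p) ^ 2 ≤ deriv Φ p) ∧
    StrictMonoOn Φ (Set.Ici 0) := by
  have hΦ' : Φ = fun p : ℝ => p / (Γ - 1) - E + ‖m‖ ^ 2 / (E + p)
      + D * Real.sqrt (1 - ‖m‖ ^ 2 / (E + p) ^ 2) := funext hΦ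
  subst hΦ'
  set M : ℝ := ‖m‖ ^ 2 with hMdef
  have hM : 0 ≤ M := sq_nonneg _
  have hmE : ‖m‖ < E := by
    refine lt_of_le_of_lt ?_ hE
    rw [show ‖m‖ = Real.sqrt (‖m‖ ^ 2) from (Real.sqrt_sq (norm_nonneg m)).symm]
    exact Real.sqrt_le_sqrt (by nlinarith [sq_nonneg D])
  have hm0 : 0 ≤ ‖m‖ := norm_nonneg m
  -- facts for p ≥ 0
  have key : ∀ p : ℝ, 0 ≤ p → 0 < E + p ∧ M < (E + p) ^ 2 ∧ 0 < 1 - M / (E + p) ^ 2 := by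
    intro p hp
    have h1 : 0 < E + p := by linarith
    have h2 : M < (E + p) ^ 2 := by nlinarith
    refine ⟨h1, h2, ?_⟩
    have : M / (E + p) ^ 2 < 1 := (div_lt_one (by positivity)).2 h2
    linarith
  -- derivative
  have hderiv : ∀ p : ℝ, 0 ≤ p →
      HasDerivAt (fun p : ℝ => p / (Γ - 1) - E + M / (E + p)
        + D * Real.sqrt (1 - M / (E + p) ^ 2))
        (1 / (Γ - 1) - M / (E + p) ^ 2
          + D * ((2 * M / (E + p) ^ 3) / (2 * Real.sqrt (1 - M / (E + p) ^ 2)))) p := by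
    intro p hp
    obtain ⟨h1, h2, h3⟩ := key p hp
    have hu : HasDerivAt (fun p : ℝ => E + p) 1 p := (hasDerivAt_id p).const_add E
    have hA : HasDerivAt (fun p : ℝ => p / (Γ - 1)) (1 / (Γ - 1)) p := by
      simpa using (hasDerivAt_id p).div_const (Γ - 1)
    have hB : HasDerivAt (fun p : ℝ => M / (E + p)) (-(M / (E + p) ^ 2)) p := by
      have := (hasDerivAt_const p M).fun_div hu h1.ne'
      refine this.congr_deriv ?_
      ring
    have hu2 : HasDerivAt (fun p : ℝ => (E + p) ^ 2) (2 * (E + p)) p := by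
      simpa using hu.fun_pow 2
    have hg : HasDerivAt (fun p : ℝ => 1 - M / (E + p) ^ 2) (2 * M / (E + p) ^ 3) p := by
      have hd : HasDerivAt (fun p : ℝ => M / (E + p) ^ 2)
          ((0 * (E + p) ^ 2 - M * (2 * (E + p))) / ((E + p) ^ 2) ^ 2) p :=
        (hasDerivAt_const p M).fun_div hu2 (by positivity)
      have := (hasDerivAt_const p (1 : ℝ)).sub hd
      refine this.congr_deriv ?_
      field_simp
      ring
    have hsq : HasDerivAt (fun p : ℝ => Real.sqrt (1 - M / (E + p) ^ 2))
        ((2 * M / (E + p) ^ 3) / (2 * Real.sqrt (1 - M / (E + p) ^ 2))) p :=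
      hg.sqrt h3.ne'
    exact ((hA.sub_const E).add hB).add (hsq.const_mul D)
  have hderiv' : ∀ p : ℝ, 0 ≤ p →
      deriv (fun p : ℝ => p / (Γ - 1) - E + M / (E + p)
        + D * Real.sqrt (1 - M / (E + p) ^ 2)) p
      = 1 / (Γ - 1) - M / (E + p) ^ 2
          + D * ((2 * M / (E + p) ^ 3) / (2 * Real.sqrt (1 - M / (E + p) ^ 2))) := by
    intro p hp
    exact (hderiv p hp).deriv
  have hmain : ∀ p : ℝ, 0 ≤ p →
      0 < 1 - M / (E + p) ^ 2 ∧ 1 - M / (E + p) ^ 2 ≤ deriv (fun p : ℝ => p / (Γ - 1) - E + M / (E + p)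
        + D * Real.sqrt (1 - M / (E + p) ^ 2)) p := by
    intro p hp
    obtain ⟨h1, h2, h3⟩ := key p hp
    refine ⟨h3, ?_⟩
    rw [hderiv' p hp]
    have hΓ : (1 : ℝ) ≤ 1 / (Γ - 1) := one_le_one_div (by linarith) (by linarith)
    have hpos : 0 ≤ D * ((2 * M / (E + p) ^ 3) / (2 * Real.sqrt (1 - M / (E + p) ^ 2))) := by
      have : 0 ≤ Real.sqrt (1 - M / (E + p) ^ 2) := Real.sqrt_nonneg _
      positivity
    linarith
  have hcd : ContDiffOn ℝ 1 (fun p : ℝ => p / (Γ - 1) - E + M / (E + p)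
        + D * Real.sqrt (1 - M / (E + p) ^ 2)) (Set.Ici 0) := by
    intro p hp
    obtain ⟨h1, h2, h3⟩ := key p (Set.mem_Ici.1 hp)
    have hu : ContDiffAt ℝ 1 (fun p : ℝ => E + p) p := contDiffAt_const.add contDiffAt_id
    have hg : ContDiffAt ℝ 1 (fun p : ℝ => 1 - M / (E + p) ^ 2) p :=
      contDiffAt_const.sub (contDiffAt_const.div (hu.pow 2) (by positivity))
    have : ContDiffAt ℝ 1 (fun p : ℝ => p / (Γ - 1) - E + M / (E + p)
        + D * Real.sqrt (1 - M / (E + p) ^ 2)) p :=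
      (((contDiffAt_id.div_const _).sub contDiffAt_const).add
        (contDiffAt_const.div hu h1.ne')).add (contDiffAt_const.mul (hg.sqrt h3.ne'))
    exact this.contDiffWithinAt
  refine ⟨hcd, fun p hp => hmain p hp, ?_⟩
  exact strictMonoOn_of_deriv_pos (convex_Ici 0) hcd.continuousOn
    (fun x hx => by
      rw [interior_Ici] at hx
      obtain ⟨h3, h4⟩ := hmain x (le_of_lt hx)
      linarith)
end

section
/- Let Γ ∈ (1,2], D > 0, m ∈ R^2, and E > sqrt(D^2 + ‖m‖^2). Define Φ(p) = p/(Γ-1) - E + ‖m‖^2/(E+p) + D·sqrt(1 - ‖m‖^2/(E+p)^2). Then Φ(0) < 0 and Φ(p) → +∞ as p → +∞; consequently there exists a unique p* > 0 with Φ(p*) = 0. -/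
/-!
Writing `M = ‖m‖²` and `s = √(E² - M)`, one has `Φ(0) = (D - s)·√(1 - M/E²)`, which is negative
because `D² < E² - M`. On `[0, ∞)` the function `Φ` is continuous, bounded below by
`p/(Γ-1) - E`, and strictly increasing: `p + M/(E+p)` is strictly increasing there since
`M ≤ E² < (E+p)(E+q)`, the remainder `p/(Γ-1) - p` is nondecreasing because `Γ ≤ 2`, and the
square-root term is nondecreasing. The intermediate value theorem then gives a positive root and
strict monotonicity makes it unique.
-/

open Filter Set

theorem existsUnique_root_of_strictMonoOn_Ici {α : Type*} [ConditionallyCompleteLinearOrder α]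
    [TopologicalSpace α] [OrderTopology α] [DenselyOrdered α] {f : α → ℝ} {a : α}
    (hcont : ContinuousOn f (Ici a)) (hmono : StrictMonoOn f (Ici a)) (ha : f a < 0)
    (htop : Tendsto f atTop atTop) : ∃! x, a < x ∧ f x = 0 := by
  obtain ⟨b, hb_pos, hab⟩ := ((htop.eventually_gt_atTop 0).and (eventually_ge_atTop a)).exists
  obtain ⟨x, ⟨hax, -⟩, hx⟩ :=
    intermediate_value_Ioc hab (hcont.mono Icc_subset_Ici_self) ⟨ha, hb_pos.le⟩
  refine ⟨x, ⟨hax, hx⟩, fun y ⟨hay, hy⟩ => ?_⟩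
  exact hmono.injOn (mem_Ici.2 hay.le) (mem_Ici.2 hax.le) (hy.trans hx.symm)

/-- The pressure equation `Φ`, with `‖m‖²` replaced by a real parameter `M`. -/
noncomputable def pressureResidual (Γ D E M p : ℝ) : ℝ :=
  p / (Γ - 1) - E + M / (E + p) + D * √(1 - M / (E + p) ^ 2)

section

variable {Γ D E M : ℝ}

theorem pressureResidual_zero (hE : 0 < E) (hME : M ≤ E ^ 2) :
    pressureResidual Γ D E M 0 = (D - √(E ^ 2 - M)) * √(1 - M / E ^ 2) := by
  have hsq : √(E ^ 2 - M) * √(1 - M / E ^ 2) = (E ^ 2 - M) / E := by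
    rw [← Real.sqrt_mul (by linarith),
      show (E ^ 2 - M) * (1 - M / E ^ 2) = ((E ^ 2 - M) / E) ^ 2 by field_simp,
      Real.sqrt_sq (div_nonneg (by linarith) hE.le)]
  rw [pressureResidual, sub_mul, hsq, add_zero, zero_div]
  field_simp
  ring

theorem pressureResidual_zero_neg (hE : 0 < E) (hDE : D ^ 2 + M < E ^ 2) :
    pressureResidual Γ D E M 0 < 0 := by
  have hD : D < √(E ^ 2 - M) := calc
    D ≤ |D| := le_abs_self D
    _ = √(D ^ 2) := (Real.sqrt_sq_eq_abs D).symm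
    _ < √(E ^ 2 - M) := Real.sqrt_lt_sqrt (sq_nonneg D) (by linarith)
  rw [pressureResidual_zero hE (by nlinarith)]
  refine mul_neg_of_neg_of_pos (sub_neg.2 hD) (Real.sqrt_pos.2 ?_)
  rw [sub_pos, div_lt_one (by positivity)]
  nlinarith

theorem tendsto_pressureResidual_atTop (hΓ : 1 < Γ) (hD : 0 ≤ D) (hM : 0 ≤ M) :
    Tendsto (pressureResidual Γ D E M) atTop atTop := by
  refine tendsto_atTop_mono' _ ?_
    (tendsto_atTop_add_const_right _ (-E) (tendsto_id.atTop_div_const (sub_pos.2 hΓ)))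
  filter_upwards [eventually_ge_atTop (-E)] with p hp
  have : 0 ≤ M / (E + p) := div_nonneg hM (by linarith)
  have : 0 ≤ D * √(1 - M / (E + p) ^ 2) := by positivity
  simp only [pressureResidual, id]
  linarith

theorem strictMonoOn_add_div (hE : 0 < E) (hME : M ≤ E ^ 2) :
    StrictMonoOn (fun p => p + M / (E + p)) (Ici 0) := by
  intro p hp q hq hpq
  simp only [mem_Ici] at hp hq
  have hEp : 0 < E + p := by linarith
  have hEq : 0 < E + q := by linarith
  have : M / (E + p) - M / (E + q) < q - p := by
    rw [div_sub_div _ _ hEp.ne' hEq.ne', div_lt_iff₀ (by positivity)]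
    have : M < (E + p) * (E + q) := by nlinarith
    nlinarith [mul_lt_mul_of_pos_left this (sub_pos.2 hpq)]
  linarith

theorem monotoneOn_sqrt_one_sub_div_sq (hE : 0 < E) (hM : 0 ≤ M) :
    MonotoneOn (fun p => √(1 - M / (E + p) ^ 2)) (Ici 0) := by
  intro p hp q _ hpq
  have : 0 < E + p := by simp only [mem_Ici] at hp; linarith
  dsimp only
  gcongr

theorem strictMonoOn_pressureResidual (hΓ1 : 1 < Γ) (hΓ2 : Γ ≤ 2) (hD : 0 ≤ D) (hM : 0 ≤ M)
    (hE : 0 < E) (hME : M ≤ E ^ 2) : StrictMonoOn (pressureResidual Γ D E M) (Ici 0) := by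
  intro p hp q hq hpq
  have h_add_div := strictMonoOn_add_div hE hME hp hq hpq
  have h_sqrt :=
    mul_le_mul_of_nonneg_left (monotoneOn_sqrt_one_sub_div_sq hE hM hp hq hpq.le) hD
  have h_linear : q - p ≤ (q - p) / (Γ - 1) :=
    le_div_self (sub_nonneg.2 hpq.le) (by linarith) (by linarith)
  rw [sub_div] at h_linear
  simp only [pressureResidual] at *
  linarith

theorem continuousOn_pressureResidual (hE : 0 < E) :
    ContinuousOn (pressureResidual Γ D E M) (Ici 0) := by
  unfold pressureResidual
  fun_prop (disch := intro p hp; simp only [mem_Ici] at hp; positivity)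

end

/-- `Φ(0) < 0`, `Φ(p) → +∞` as `p → +∞`, and there is a unique positive root of `Φ`. -/
theorem pressure_eq_unique_root
    (Γ D E : ℝ) (m : EuclideanSpace ℝ (Fin 2))
    (hΓ1 : 1 < Γ) (hΓ2 : Γ ≤ 2) (hD : 0 < D)
    (hE : Real.sqrt (D ^ 2 + ‖m‖ ^ 2) < E)
    (Φ : ℝ → ℝ)
    (hΦ : ∀ p : ℝ, Φ p = p / (Γ - 1) - E + ‖m‖ ^ 2 / (E + p)
      + D * Real.sqrt (1 - ‖m‖ ^ 2 / (E + p) ^ 2)) :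
    Φ 0 < 0 ∧ Filter.Tendsto Φ Filter.atTop Filter.atTop ∧
    ∃! p : ℝ, 0 < p ∧ Φ p = 0 := by
  have hE0 : 0 < E := (Real.sqrt_nonneg _).trans_lt hE
  have hDE : D ^ 2 + ‖m‖ ^ 2 < E ^ 2 := (Real.sqrt_lt' hE0).1 hE
  have hM : 0 ≤ ‖m‖ ^ 2 := sq_nonneg _
  obtain rfl : Φ = pressureResidual Γ D E (‖m‖ ^ 2) := funext hΦ
  have hΦ0 := pressureResidual_zero_neg (Γ := Γ) hE0 hDE
  have htop := tendsto_pressureResidual_atTop (E := E) hΓ1 hD.le hM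
  refine ⟨hΦ0, htop, existsUnique_root_of_strictMonoOn_Ici (continuousOn_pressureResidual hE0)
    (strictMonoOn_pressureResidual hΓ1 hΓ2 hD.le hM hE0 (by nlinarith)) hΦ0 htop⟩
end

section
/- Let Γ ∈ (1,2], D > 0, m ∈ R^2, E > sqrt(D^2 + ‖m‖^2), and let p* > 0 be the unique root of Φ(p) = p/(Γ-1) - E + ‖m‖^2/(E+p) + D·sqrt(1 - ‖m‖^2/(E+p)^2) on (0,∞). Then p* ≤ (Γ-1)·(E - D·sqrt(1 - ‖m‖^2/E^2)). -/
/-! At the root, `p*/(Γ-1) = E - ‖m‖²/(E+p*) - D √(1 - ‖m‖²/(E+p*)²)`. Dropping the nonnegative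
middle term and using that `√(1 - ‖m‖²/q²)` increases in `q` (take `q = E ≤ E+p*`) gives the bound. -/

lemma Real.sqrt_one_sub_div_sq_le_sqrt_one_sub_div_sq {a x y : ℝ} (ha : 0 ≤ a) (hx : 0 < x)
    (hxy : x ≤ y) : √(1 - a / x ^ 2) ≤ √(1 - a / y ^ 2) := by
  have hdiv : a / y ^ 2 ≤ a / x ^ 2 :=
    div_le_div_of_nonneg_left ha (pow_pos hx 2) (pow_le_pow_left₀ hx.le hxy 2)
  exact Real.sqrt_le_sqrt (by linarith)

theorem pressure_root_upper_bound_general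
    (Γ D E pstar : ℝ) (m : EuclideanSpace ℝ (Fin 2))
    (hΓ1 : 1 < Γ) (hD : 0 < D)
    (hE : Real.sqrt (D ^ 2 + ‖m‖ ^ 2) < E)
    (Φ : ℝ → ℝ)
    (hΦ : ∀ p : ℝ, Φ p = p / (Γ - 1) - E + ‖m‖ ^ 2 / (E + p)
      + D * Real.sqrt (1 - ‖m‖ ^ 2 / (E + p) ^ 2))
    (hpstar : 0 < pstar) (hroot : Φ pstar = 0) :
    pstar ≤ (Γ - 1) * (E - D * Real.sqrt (1 - ‖m‖ ^ 2 / E ^ 2)) := by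
  have hE0 : 0 < E := (Real.sqrt_nonneg _).trans_lt hE
  have hsqrt : D * √(1 - ‖m‖ ^ 2 / E ^ 2) ≤ D * √(1 - ‖m‖ ^ 2 / (E + pstar) ^ 2) :=
    mul_le_mul_of_nonneg_left
      (Real.sqrt_one_sub_div_sq_le_sqrt_one_sub_div_sq (sq_nonneg _) hE0 (by linarith)) hD.le
  have hkinetic : 0 ≤ ‖m‖ ^ 2 / (E + pstar) := by positivity
  rw [hΦ pstar] at hroot
  rw [← div_le_iff₀' (by linarith : 0 < Γ - 1)]
  linarith

/-- The unique positive root `p*` of the pressure equation satisfies the explicit upper bound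
`p* ≤ (Γ-1) (E - D sqrt (1 - ‖m‖²/E²))`. -/
theorem pressure_root_upper_bound
    (Γ D E pstar : ℝ) (m : EuclideanSpace ℝ (Fin 2))
    (hΓ1 : 1 < Γ) (hΓ2 : Γ ≤ 2) (hD : 0 < D)
    (hE : Real.sqrt (D ^ 2 + ‖m‖ ^ 2) < E)
    (Φ : ℝ → ℝ)
    (hΦ : ∀ p : ℝ, Φ p = p / (Γ - 1) - E + ‖m‖ ^ 2 / (E + p)
      + D * Real.sqrt (1 - ‖m‖ ^ 2 / (E + p) ^ 2))
    (hpstar : 0 < pstar) (hroot : Φ pstar = 0) :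
    pstar ≤ (Γ - 1) * (E - D * Real.sqrt (1 - ‖m‖ ^ 2 / E ^ 2)) :=
  pressure_root_upper_bound_general Γ D E pstar m hΓ1 hD hE Φ hΦ hpstar hroot
end

section
/- Let Γ ∈ (1,2], D > 0, m ∈ R^2, and E > sqrt(D^2 + ‖m‖^2). Define Φ as above and δ := (Γ-1)·‖m‖^2/E^2. Then for all p ≥ 0, 0 ≤ 1 - (Γ-1)·Φ'(p) ≤ δ < 1; in particular the iteration map T(p) := p - (Γ-1)·Φ(p) is a contraction on [0,∞) with Lipschitz constant δ, and is monotonically increasing. -/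
set_option maxHeartbeats 1000000 in
/-- The iteration map `T(p) = p - (Γ-1) Φ(p)` is a monotone contraction on `[0,∞)`:
`0 ≤ 1 - (Γ-1) Φ'(p) ≤ δ < 1` with `δ = (Γ-1)‖m‖²/E²`. -/
theorem fixed_point_contraction
    (Γ D E : ℝ) (m : EuclideanSpace ℝ (Fin 2))
    (hΓ1 : 1 < Γ) (hΓ2 : Γ ≤ 2) (hD : 0 < D)
    (hE : Real.sqrt (D ^ 2 + ‖m‖ ^ 2) < E)
    (Φ T : ℝ → ℝ) (δ : ℝ)
    (hΦ : ∀ p : ℝ, Φ p = p / (Γ - 1) - E + ‖m‖ ^ 2 / (E + p)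
      + D * Real.sqrt (1 - ‖m‖ ^ 2 / (E + p) ^ 2))
    (hT : ∀ p : ℝ, T p = p - (Γ - 1) * Φ p)
    (hδ : δ = (Γ - 1) * ‖m‖ ^ 2 / E ^ 2) :
    (∀ p : ℝ, 0 ≤ p →
      0 ≤ 1 - (Γ - 1) * deriv Φ p ∧ 1 - (Γ - 1) * deriv Φ p ≤ δ) ∧
    δ < 1 ∧
    (∀ p ∈ Set.Ici (0 : ℝ), ∀ q ∈ Set.Ici (0 : ℝ), |T p - T q| ≤ δ * |p - q|) ∧
    MonotoneOn T (Set.Ici 0) := by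
  have hE0 : 0 < E := (Real.sqrt_nonneg _).trans_lt hE
  have hsq := Real.sq_sqrt (by positivity : (0:ℝ) ≤ D ^ 2 + ‖m‖ ^ 2)
  have hE2 : D ^ 2 + ‖m‖ ^ 2 < E ^ 2 := by
    nlinarith [Real.sqrt_nonneg (D ^ 2 + ‖m‖ ^ 2)]
  have hM : (0:ℝ) ≤ ‖m‖ ^ 2 := sq_nonneg _
  have hMEl : ‖m‖ ^ 2 < E ^ 2 := by nlinarith
  have hΓ : 0 < Γ - 1 := by linarith
  -- derivative of Φ
  have hderiv : ∀ p : ℝ, 0 ≤ p → HasDerivAt Φ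
      (1 / (Γ - 1) - ‖m‖ ^ 2 / (E + p) ^ 2
        + D * (‖m‖ ^ 2 / ((E + p) ^ 3 * Real.sqrt (1 - ‖m‖ ^ 2 / (E + p) ^ 2)))) p := by
    intro p hp
    have hEp : 0 < E + p := by linarith
    have hg : 0 < 1 - ‖m‖ ^ 2 / (E + p) ^ 2 := by
      rw [sub_pos, div_lt_one (by positivity)]; nlinarith
    have h1 : HasDerivAt (fun q : ℝ => E + q) 1 p := by
      simpa using (hasDerivAt_id p).const_add E
    have h2 : HasDerivAt (fun q : ℝ => ‖m‖ ^ 2 / (E + q))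
        ((0 * (E + p) - ‖m‖ ^ 2 * 1) / (E + p) ^ 2) p :=
      (hasDerivAt_const p (‖m‖ ^ 2)).div h1 (ne_of_gt hEp)
    have h3 : HasDerivAt (fun q : ℝ => (E + q) ^ 2) (2 * (E + p) ^ 1 * 1) p := h1.pow 2
    have h4 : HasDerivAt (fun q : ℝ => ‖m‖ ^ 2 / (E + q) ^ 2)
        ((0 * (E + p) ^ 2 - ‖m‖ ^ 2 * (2 * (E + p) ^ 1 * 1)) / ((E + p) ^ 2) ^ 2) p :=
      (hasDerivAt_const p (‖m‖ ^ 2)).div h3 (by positivity)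
    have h5 : HasDerivAt (fun q : ℝ => 1 - ‖m‖ ^ 2 / (E + q) ^ 2)
        (0 - (0 * (E + p) ^ 2 - ‖m‖ ^ 2 * (2 * (E + p) ^ 1 * 1)) / ((E + p) ^ 2) ^ 2) p :=
      (hasDerivAt_const p 1).sub h4
    have h6 : HasDerivAt (fun q : ℝ => Real.sqrt (1 - ‖m‖ ^ 2 / (E + q) ^ 2))
        (1 / (2 * Real.sqrt (1 - ‖m‖ ^ 2 / (E + p) ^ 2)) *
          (0 - (0 * (E + p) ^ 2 - ‖m‖ ^ 2 * (2 * (E + p) ^ 1 * 1)) / ((E + p) ^ 2) ^ 2)) p :=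
      (Real.hasDerivAt_sqrt (ne_of_gt hg)).comp p h5
    have h0 : HasDerivAt (fun q : ℝ => q / (Γ - 1)) (1 / (Γ - 1)) p := by
      simpa using (hasDerivAt_id p).div_const (Γ - 1)
    have hΦ' : HasDerivAt Φ
        (1 / (Γ - 1) - 0 + (0 * (E + p) - ‖m‖ ^ 2 * 1) / (E + p) ^ 2
          + D * (1 / (2 * Real.sqrt (1 - ‖m‖ ^ 2 / (E + p) ^ 2)) *
            (0 - (0 * (E + p) ^ 2 - ‖m‖ ^ 2 * (2 * (E + p) ^ 1 * 1)) / ((E + p) ^ 2) ^ 2))) p := by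
      have h := (((h0.sub (hasDerivAt_const p E)).add h2).add (h6.const_mul D))
      refine h.congr_of_eventuallyEq ?_
      filter_upwards with q
      rw [hΦ q]; rfl
    have hs : 0 < Real.sqrt (1 - ‖m‖ ^ 2 / (E + p) ^ 2) := Real.sqrt_pos.mpr hg
    set s := Real.sqrt (1 - ‖m‖ ^ 2 / (E + p) ^ 2) with hsdef
    convert hΦ' using 1
    field_simp
    ring
  -- bound on 1 - (Γ-1) Φ'(p)
  have key : ∀ p : ℝ, 0 ≤ p →
      0 ≤ 1 - (Γ - 1) * deriv Φ p ∧ 1 - (Γ - 1) * deriv Φ p ≤ δ := by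
    intro p hp
    have hEp : 0 < E + p := by linarith
    have hg : 0 < 1 - ‖m‖ ^ 2 / (E + p) ^ 2 := by
      rw [sub_pos, div_lt_one (by positivity)]; nlinarith
    set s := Real.sqrt (1 - ‖m‖ ^ 2 / (E + p) ^ 2) with hsdef
    have hs0 : 0 < s := Real.sqrt_pos.mpr hg
    have hs2 : s ^ 2 = 1 - ‖m‖ ^ 2 / (E + p) ^ 2 := Real.sq_sqrt hg.le
    have hprod : ((E + p) * s) ^ 2 = (E + p) ^ 2 - ‖m‖ ^ 2 := by
      have : ((E + p) * s) ^ 2 = (E + p) ^ 2 * s ^ 2 := by ring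
      rw [this, hs2]; field_simp
    have hDs : D < (E + p) * s := by
      nlinarith [mul_pos hEp hs0]
    have hd : deriv Φ p = 1 / (Γ - 1) - ‖m‖ ^ 2 / (E + p) ^ 2
        + D * (‖m‖ ^ 2 / ((E + p) ^ 3 * s)) := (hderiv p hp).deriv
    have hA : 1 - (Γ - 1) * deriv Φ p
        = (Γ - 1) * (‖m‖ ^ 2 / (E + p) ^ 2 - D * (‖m‖ ^ 2 / ((E + p) ^ 3 * s))) := by
      rw [hd]; field_simp; ring
    have hterm : D * (‖m‖ ^ 2 / ((E + p) ^ 3 * s)) ≤ ‖m‖ ^ 2 / (E + p) ^ 2 := by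
      rw [mul_div_assoc', div_le_div_iff₀ (by positivity) (by positivity)]
      nlinarith [mul_nonneg (mul_nonneg hM (sq_nonneg (E + p))) (sub_nonneg.mpr hDs.le)]
    have hterm0 : 0 ≤ D * (‖m‖ ^ 2 / ((E + p) ^ 3 * s)) := by positivity
    constructor
    · rw [hA]
      exact mul_nonneg hΓ.le (by linarith)
    · rw [hA, hδ, mul_div_assoc]
      apply mul_le_mul_of_nonneg_left _ hΓ.le
      have h1 : ‖m‖ ^ 2 / (E + p) ^ 2 ≤ ‖m‖ ^ 2 / E ^ 2 := by
        exact div_le_div_of_nonneg_left hM (pow_pos hE0 2)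
          (by nlinarith [sq_nonneg p, mul_nonneg hE0.le hp])
      linarith
  have hδlt : δ < 1 := by
    rw [hδ, div_lt_one (by positivity)]
    nlinarith
  -- derivative of T
  have hTd : ∀ p : ℝ, 0 ≤ p → HasDerivAt T (1 - (Γ - 1) * deriv Φ p) p := by
    intro p hp
    have hd := hderiv p hp
    have h : HasDerivAt (fun q : ℝ => q - (Γ - 1) * Φ q) (1 - (Γ - 1) * deriv Φ p) p := by
      rw [hd.deriv]
      exact (hasDerivAt_id p).sub (hd.const_mul (Γ - 1))
    exact h.congr_of_eventuallyEq (by filter_upwards with q; rw [hT q])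
  refine ⟨key, hδlt, ?_, ?_⟩
  · intro p hp q hq
    have h := Convex.norm_image_sub_le_of_norm_hasDerivWithin_le
      (f' := fun x => 1 - (Γ - 1) * deriv Φ x) (C := δ)
      (fun x hx => (hTd x hx).hasDerivWithinAt)
      (fun x hx => by
        have h1 := (key x hx).1
        have h2 := (key x hx).2
        simp only [Real.norm_eq_abs, abs_le]
        exact ⟨by linarith, by linarith⟩)
      (convex_Ici 0) hq hp
    simpa [Real.norm_eq_abs] using h
  · apply monotoneOn_of_deriv_nonneg (convex_Ici 0)
    · exact fun x hx => (hTd x hx).continuousAt.continuousWithinAt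
    · intro x hx
      rw [interior_Ici] at hx
      exact (hTd x hx.le).differentiableAt.differentiableWithinAt
    · intro x hx
      rw [interior_Ici] at hx
      rw [(hTd x hx.le).deriv]
      exact (key x hx.le).1
end

section
/- Let Γ ∈ (1,2], D > 0, m ∈ R^2, E > sqrt(D^2 + ‖m‖^2), and T(p) := p - (Γ-1)·Φ(p) with Φ as above. Then T(0) = (Γ-1)·(E - ‖m‖^2/E - D·sqrt(1 - ‖m‖^2/E^2)) > 0, and consequently if p > 0 then T(p) > 0; so the fixed-point iteration starting from any positive initial value stays positive. -/
/-!
Write `T p = (Γ - 1) (E - f (E + p))` with `f q = ‖m‖²/q + D √(1 - ‖m‖²/q²)`. Putting `x = ‖m‖/q`,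
`f q = ‖m‖ x + D √(1 - x²)` is an inner product of `(‖m‖, D)` with a unit vector, so by
Cauchy–Schwarz `f q ≤ √(D² + ‖m‖²) < E` as soon as `‖m‖ ≤ q`, which holds for `q = E + p`, `p ≥ 0`.
-/

lemma mul_add_mul_sqrt_one_sub_sq_le_sqrt (a b x : ℝ) (hx : x ^ 2 ≤ 1) :
    a * x + b * √(1 - x ^ 2) ≤ √(a ^ 2 + b ^ 2) := by
  have hy : √(1 - x ^ 2) ^ 2 = 1 - x ^ 2 := Real.sq_sqrt (by linarith)
  refine (le_abs_self _).trans (Real.abs_le_sqrt ?_)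
  nlinarith [sq_nonneg (a * √(1 - x ^ 2) - b * x)]

lemma sq_div_add_mul_sqrt_one_sub_le_sqrt (D M q : ℝ) (hq : |M| ≤ q) :
    M ^ 2 / q + D * √(1 - M ^ 2 / q ^ 2) ≤ √(D ^ 2 + M ^ 2) := by
  have hx : (M / q) ^ 2 ≤ 1 := by
    rw [div_pow]
    exact div_le_one_of_le₀ (sq_le_sq' (neg_le_of_abs_le hq) (le_of_abs_le hq)) (sq_nonneg q)
  have key := mul_add_mul_sqrt_one_sub_sq_le_sqrt M D (M / q) hx
  rwa [mul_div_assoc', ← sq, div_pow, add_comm (M ^ 2)] at key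

theorem fixed_point_positive_general
    (Γ D E : ℝ) (m : EuclideanSpace ℝ (Fin 2))
    (hΓ1 : 1 < Γ)
    (hE : Real.sqrt (D ^ 2 + ‖m‖ ^ 2) < E)
    (Φ T : ℝ → ℝ)
    (hΦ : ∀ p : ℝ, Φ p = p / (Γ - 1) - E + ‖m‖ ^ 2 / (E + p)
      + D * Real.sqrt (1 - ‖m‖ ^ 2 / (E + p) ^ 2))
    (hT : ∀ p : ℝ, T p = p - (Γ - 1) * Φ p) :
    T 0 = (Γ - 1) * (E - ‖m‖ ^ 2 / E - D * Real.sqrt (1 - ‖m‖ ^ 2 / E ^ 2)) ∧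
    0 < T 0 ∧
    (∀ p : ℝ, 0 < p → 0 < T p) := by
  have hΓ : 0 < Γ - 1 := sub_pos.2 hΓ1
  have hT_eq : ∀ p, T p = (Γ - 1) * (E - (‖m‖ ^ 2 / (E + p)
      + D * √(1 - ‖m‖ ^ 2 / (E + p) ^ 2))) := by
    intro p
    rw [hT, hΦ]
    field_simp
    ring
  have hm : |‖m‖| < E :=
    (Real.abs_le_sqrt (le_add_of_nonneg_left (sq_nonneg D))).trans_lt hE
  have hT_pos : ∀ p, 0 ≤ p → 0 < T p := fun p hp => by
    rw [hT_eq]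
    refine mul_pos hΓ (sub_pos.2 ?_)
    exact (sq_div_add_mul_sqrt_one_sub_le_sqrt D ‖m‖ (E + p) (by linarith)).trans_lt hE
  refine ⟨?_, hT_pos 0 le_rfl, fun p hp => hT_pos p hp.le⟩
  rw [hT_eq, add_zero]
  ring

/-- `T(0) = (Γ-1)(E - ‖m‖²/E - D sqrt (1 - ‖m‖²/E²)) > 0`, and the fixed-point iteration
`T` maps positive values to positive values. -/
theorem fixed_point_positive
    (Γ D E : ℝ) (m : EuclideanSpace ℝ (Fin 2))
    (hΓ1 : 1 < Γ) (hΓ2 : Γ ≤ 2) (hD : 0 < D)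
    (hE : Real.sqrt (D ^ 2 + ‖m‖ ^ 2) < E)
    (Φ T : ℝ → ℝ)
    (hΦ : ∀ p : ℝ, Φ p = p / (Γ - 1) - E + ‖m‖ ^ 2 / (E + p)
      + D * Real.sqrt (1 - ‖m‖ ^ 2 / (E + p) ^ 2))
    (hT : ∀ p : ℝ, T p = p - (Γ - 1) * Φ p) :
    T 0 = (Γ - 1) * (E - ‖m‖ ^ 2 / E - D * Real.sqrt (1 - ‖m‖ ^ 2 / E ^ 2)) ∧
    0 < T 0 ∧
    (∀ p : ℝ, 0 < p → 0 < T p) :=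
  fixed_point_positive_general Γ D E m hΓ1 hE Φ T hΦ hT
end

section
/- Let ρ > 0, p > 0, Γ ∈ (1,2], v = (v1,v2) ∈ R^2 with ‖v‖ < 1, c_s = sqrt(Γp/(ρ + Γp/(Γ-1))), γ = 1/sqrt(1-‖v‖^2), and let n be a unit vector in R^2 with v_n := ⟨v,n⟩. Define λ := (v_n(1-c_s^2) + c_s·γ^{-1}·sqrt(1 - v_n^2 - (‖v‖^2 - v_n^2)c_s^2)) / (1 - ‖v‖^2 c_s^2). Then λ - v_n ≥ c_s·γ^{-2}·(1 - v_n c_s)/(1 - ‖v‖^2 c_s^2) > 0, and λ < 1. -/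
open scoped RealInnerProductSpace

set_option maxHeartbeats 1600000

/-- The largest eigenvalue `λ = λ_n^{(4)}` of the rotated flux Jacobian satisfies
`λ - v_n ≥ c_s γ⁻² (1 - v_n c_s)/(1 - ‖v‖² c_s²) > 0` and `λ < 1`. -/
theorem eigenvalue_bounds
    (Γ ρ p cs γ vn lam : ℝ) (v n : EuclideanSpace ℝ (Fin 2))
    (hΓ1 : 1 < Γ) (hΓ2 : Γ ≤ 2) (hρ : 0 < ρ) (hp : 0 < p)
    (hv : ‖v‖ < 1) (hn : ‖n‖ = 1)
    (hcs : cs = Real.sqrt (Γ * p / (ρ + Γ * p / (Γ - 1))))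
    (hγ : γ = 1 / Real.sqrt (1 - ‖v‖ ^ 2))
    (hvn : vn = ⟪v, n⟫)
    (hlam : lam = (vn * (1 - cs ^ 2)
        + cs * γ⁻¹ * Real.sqrt (1 - vn ^ 2 - (‖v‖ ^ 2 - vn ^ 2) * cs ^ 2))
      / (1 - ‖v‖ ^ 2 * cs ^ 2)) :
    cs * γ⁻¹ ^ 2 * (1 - vn * cs) / (1 - ‖v‖ ^ 2 * cs ^ 2) ≤ lam - vn ∧
    0 < cs * γ⁻¹ ^ 2 * (1 - vn * cs) / (1 - ‖v‖ ^ 2 * cs ^ 2) ∧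
    lam < 1 := by
  have hvnle : |vn| ≤ ‖v‖ := by
    rw [hvn]
    calc |⟪v, n⟫| ≤ ‖v‖ * ‖n‖ := abs_real_inner_le_norm v n
    _ = ‖v‖ := by rw [hn, mul_one]
  clear hvn hn
  obtain ⟨w, hw⟩ : ∃ w : ℝ, w = ‖v‖ := ⟨_, rfl⟩
  have hv0 : (0:ℝ) ≤ w := hw ▸ norm_nonneg v
  rw [← hw] at hv hγ hlam hvnle ⊢
  clear hw
  have hu : w ^ 2 < 1 := by nlinarith
  have hΓp : 0 < Γ * p / (Γ - 1) := by
    apply div_pos (by nlinarith) (by linarith)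
  have hden : 0 < ρ + Γ * p / (Γ - 1) := by linarith
  have hX0 : 0 < Γ * p / (ρ + Γ * p / (Γ - 1)) := div_pos (by nlinarith) hden
  have hX1 : Γ * p / (ρ + Γ * p / (Γ - 1)) < 1 := by
    rw [div_lt_one hden]
    have hgp : 0 < Γ * p := by nlinarith
    have h1 : Γ * p ≤ Γ * p / (Γ - 1) := by
      rw [le_div_iff₀ (by linarith)]
      nlinarith [mul_le_mul_of_nonneg_left (show Γ - 1 ≤ 1 by linarith) hgp.le]
    linarith
  have hc0 : 0 < cs := by rw [hcs]; exact Real.sqrt_pos.mpr hX0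
  have hc2 : cs ^ 2 = Γ * p / (ρ + Γ * p / (Γ - 1)) := by
    rw [hcs]; exact Real.sq_sqrt hX0.le
  have hc1 : cs ^ 2 < 1 := by rw [hc2]; exact hX1
  have hcs1 : cs < 1 := by nlinarith
  have hvn2 : vn ^ 2 ≤ w ^ 2 := by
    have := sq_abs vn
    nlinarith [abs_nonneg vn]
  have hvn1 : vn < 1 := lt_of_le_of_lt (le_trans (le_abs_self vn) hvnle) hv
  have hginv : γ⁻¹ = Real.sqrt (1 - w ^ 2) := by rw [hγ, one_div, inv_inv]
  have hg2 : γ⁻¹ ^ 2 = 1 - w ^ 2 := by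
    rw [hginv]; exact Real.sq_sqrt (by linarith)
  have hgpos : 0 < γ⁻¹ := by
    rw [hginv]; exact Real.sqrt_pos.mpr (by linarith)
  have hD : 0 < 1 - w ^ 2 * cs ^ 2 := by nlinarith
  set S := Real.sqrt (1 - vn ^ 2 - (w ^ 2 - vn ^ 2) * cs ^ 2) with hSdef
  have hargS : 1 - w ^ 2 ≤ 1 - vn ^ 2 - (w ^ 2 - vn ^ 2) * cs ^ 2 := by
    nlinarith [mul_nonneg (sub_nonneg.mpr hvn2) (sub_nonneg.mpr hc1.le)]
  have hS2 : S ^ 2 = 1 - vn ^ 2 - (w ^ 2 - vn ^ 2) * cs ^ 2 :=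
    Real.sq_sqrt (by linarith)
  have hSge : γ⁻¹ ≤ S := by
    rw [hginv, hSdef]; exact Real.sqrt_le_sqrt hargS
  have hSpos : 0 < S := lt_of_lt_of_le hgpos hSge
  have hlam' : lam - vn = ((vn * (1 - cs ^ 2) + cs * γ⁻¹ * S)
      - vn * (1 - w ^ 2 * cs ^ 2)) / (1 - w ^ 2 * cs ^ 2) := by
    rw [hlam, div_sub' hD.ne']; ring_nf
  have hvncs : vn * cs < 1 := by
    nlinarith [mul_pos (sub_pos.mpr hvn1) hc0]
  refine ⟨?_, ?_, ?_⟩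
  · rw [hlam']
    have key : cs * γ⁻¹ ^ 2 * (1 - vn * cs)
        ≤ (vn * (1 - cs ^ 2) + cs * γ⁻¹ * S) - vn * (1 - w ^ 2 * cs ^ 2) := by
      have h2 : cs * (1 - w ^ 2) ≤ cs * γ⁻¹ * S := by
        calc cs * (1 - w ^ 2) = cs * γ⁻¹ * γ⁻¹ := by rw [mul_assoc, ← pow_two, hg2]
        _ ≤ cs * γ⁻¹ * S := mul_le_mul_of_nonneg_left hSge (by positivity)
      rw [hg2]
      nlinarith [h2]
    exact (div_le_div_iff_of_pos_right hD).mpr key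
  · apply div_pos _ hD
    have h1 : 0 < 1 - vn * cs := by linarith
    have h2 : 0 < γ⁻¹ ^ 2 := by positivity
    positivity
  · rw [hlam, div_lt_one hD]
    have hB : 0 < (1 - vn) - cs ^ 2 * (w ^ 2 - vn) := by
      nlinarith [mul_pos (sub_pos.mpr hc1) (sub_pos.mpr hvn1)]
    have hA2 : (cs * γ⁻¹ * S) ^ 2
        = cs ^ 2 * (1 - w ^ 2) * (1 - vn ^ 2 - (w ^ 2 - vn ^ 2) * cs ^ 2) := by
      rw [mul_pow, mul_pow, hg2, hS2]
    have hBA : (cs * γ⁻¹ * S) ^ 2 < ((1 - vn) - cs ^ 2 * (w ^ 2 - vn)) ^ 2 := by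
      rw [hA2]
      nlinarith [mul_pos (mul_pos (mul_pos (sub_pos.mpr hvn1) (sub_pos.mpr hvn1))
        (sub_pos.mpr hc1)) hD]
    have hAB : cs * γ⁻¹ * S < (1 - vn) - cs ^ 2 * (w ^ 2 - vn) :=
      lt_of_pow_lt_pow_left₀ 2 hB.le hBA
    linarith
end

section
/- With the hypotheses and notation of the previous eigenvalue setting (ρ,p > 0, Γ ∈ (1,2], ‖v‖ < 1, unit vector n, v_n = ⟨v,n⟩, sound speed c_s, Lorentz factor γ, and λ = λ_n^{(4)} the largest eigenvalue), the following inequality holds: v_n / (λ - v_n) < -1 + γ^2·(1 + 1/c_s). -/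
open scoped RealInnerProductSpace

set_option maxHeartbeats 1600000 in
private lemma aux_main (w vn cs g s lam : ℝ)
    (hw1 : w < 1) (hvnw : |vn| ≤ w)
    (hcs0 : 0 < cs) (hcs2 : cs ^ 2 < 1)
    (hg0 : 0 < g) (hgsq : g ^ 2 = 1 - w ^ 2)
    (hs0 : 0 < s) (hs2 : s ^ 2 = 1 - vn ^ 2 - (w ^ 2 - vn ^ 2) * cs ^ 2)
    (hlam : lam = (vn * (1 - cs ^ 2) + cs * g * s) / (1 - w ^ 2 * cs ^ 2)) :
    vn / (lam - vn) < -1 + (1 / g) ^ 2 * (1 + 1 / cs) := by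
  have hw0 : 0 ≤ w := le_trans (abs_nonneg vn) hvnw
  have hvn2w : vn ^ 2 ≤ w ^ 2 := by nlinarith [abs_nonneg vn, sq_abs vn]
  have hw2 : w ^ 2 < 1 := by nlinarith
  have hvn1 : vn ^ 2 < 1 := lt_of_le_of_lt hvn2w hw2
  have hcs1 : cs < 1 := by nlinarith
  have hA : 0 < 1 - w ^ 2 * cs ^ 2 := by
    nlinarith [mul_nonneg (sq_nonneg w) (by linarith : (0:ℝ) ≤ 1 - cs ^ 2)]
  have hsg : g ≤ s := by
    nlinarith [mul_nonneg (sub_nonneg.2 hvn2w) (by linarith : (0:ℝ) ≤ 1 - cs ^ 2)]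
  have hvncs : -1 < vn * cs := by
    have h1 : -w ≤ vn := (abs_le.1 hvnw).1
    nlinarith [mul_le_mul_of_nonneg_right h1 hcs0.le,
      mul_nonneg hw0 (by nlinarith : (0:ℝ) ≤ 1 - cs)]
  have hpos : 0 < vn * cs * g + s := by
    nlinarith [mul_pos hg0 (by linarith : (0:ℝ) < 1 + vn * cs)]
  have hkey : (vn * (1 - cs ^ 2) + cs * g * s - vn * (1 - w ^ 2 * cs ^ 2))
      * (vn * cs * g + s) = cs * g * (1 - vn ^ 2) * (1 - w ^ 2 * cs ^ 2) := by
    linear_combination cs * g * hs2 + vn * cs ^ 2 * s * hgsq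
  have hlam' : lam - vn = cs * g * (1 - vn ^ 2) / (vn * cs * g + s) := by
    rw [hlam, eq_div_iff hpos.ne', div_sub' hA.ne', div_mul_eq_mul_div,
      div_eq_iff hA.ne']
    linear_combination (1 - w ^ 2 * cs ^ 2) * hkey + cs ^ 3 * g * w ^ 2 * hs2
      + vn * cs ^ 4 * s * w ^ 2 * hgsq
  have hratio : vn / (lam - vn) = vn * (vn * cs * g + s) / (cs * g * (1 - vn ^ 2)) := by
    rw [hlam', div_div_eq_mul_div]
  -- main inequality
  have hstar : g * vn * (vn * cs * g + s) < (1 + cs * w ^ 2) * (1 - vn ^ 2) := by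
    rcases le_or_gt vn 0 with hle | hlt
    · have e1 : g * vn * s ≤ 0 :=
        mul_nonpos_of_nonpos_of_nonneg (mul_nonpos_of_nonneg_of_nonpos hg0.le hle) hs0.le
      have e2 : cs * g ^ 2 * vn ^ 2 = cs * (1 - w ^ 2) * vn ^ 2 := by rw [hgsq]
      have e3 : cs * (1 - w ^ 2) * vn ^ 2 ≤ cs * (1 - vn ^ 2) * vn ^ 2 := by
        nlinarith [mul_nonneg (mul_nonneg hcs0.le (sq_nonneg vn)) (sub_nonneg.2 hvn2w)]
      have e4 : cs * (1 - vn ^ 2) * vn ^ 2 < 1 * (1 - vn ^ 2) := by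
        have h6 : cs * vn ^ 2 < 1 := by
          nlinarith [mul_nonneg (by linarith : (0:ℝ) ≤ 1 - cs) (sq_nonneg vn)]
        nlinarith [mul_pos (sub_pos.2 hvn1) (sub_pos.2 h6)]
      have e5 : (1:ℝ) * (1 - vn ^ 2) ≤ (1 + cs * w ^ 2) * (1 - vn ^ 2) := by
        nlinarith [mul_nonneg (mul_nonneg hcs0.le (sq_nonneg w)) (sub_pos.2 hvn1).le]
      nlinarith [e1, e2, e3, e4, e5]
    · set t := Real.sqrt (1 - vn ^ 2) with htdef
      have ht0 : 0 < t := Real.sqrt_pos.2 (by linarith)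
      have ht2 : t ^ 2 = 1 - vn ^ 2 := Real.sq_sqrt (by linarith)
      have hst : s ≤ t := by
        nlinarith [mul_nonneg (sub_nonneg.2 hvn2w) (sq_nonneg cs)]
      have hgv : g * vn ≤ w * t := by
        nlinarith [mul_pos hg0 hlt, mul_nonneg hw0 ht0.le]
      have hgvs : g * vn * s ≤ w * (1 - vn ^ 2) := by
        calc g * vn * s ≤ (w * t) * s := mul_le_mul_of_nonneg_right hgv hs0.le
          _ ≤ (w * t) * t := mul_le_mul_of_nonneg_left hst (mul_nonneg hw0 ht0.le)
          _ = w * (1 - vn ^ 2) := by rw [mul_assoc, ← sq, ht2]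
      nlinarith [mul_pos (sub_pos.2 hw1) (sub_pos.2 hvn1),
        mul_nonneg hcs0.le (sub_nonneg.2 hvn2w)]
  rw [hratio, div_lt_iff₀ (mul_pos (mul_pos hcs0 hg0) (sub_pos.2 hvn1))]
  have h := mul_lt_mul_of_pos_left hstar (by positivity : (0:ℝ) < 1 / g)
  calc vn * (vn * cs * g + s) = (1 / g) * (g * vn * (vn * cs * g + s)) := by
        field_simp
    _ < (1 / g) * ((1 + cs * w ^ 2) * (1 - vn ^ 2)) := h
    _ = (-1 + (1 / g) ^ 2 * (1 + 1 / cs)) * (cs * g * (1 - vn ^ 2)) := by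
        field_simp
        linear_combination cs * (1 - vn ^ 2) * hgsq
    
/-- Bound `v_n / (λ - v_n) < -1 + γ² (1 + 1/c_s)` for the largest eigenvalue
`λ = λ_n^{(4)}` of the rotated flux Jacobian. -/
theorem eigenvalue_ratio_bound
    (Γ ρ p cs γ vn lam : ℝ) (v n : EuclideanSpace ℝ (Fin 2))
    (hΓ1 : 1 < Γ) (hΓ2 : Γ ≤ 2) (hρ : 0 < ρ) (hp : 0 < p)
    (hv : ‖v‖ < 1) (hn : ‖n‖ = 1)
    (hcs : cs = Real.sqrt (Γ * p / (ρ + Γ * p / (Γ - 1))))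
    (hγ : γ = 1 / Real.sqrt (1 - ‖v‖ ^ 2))
    (hvn : vn = ⟪v, n⟫)
    (hlam : lam = (vn * (1 - cs ^ 2)
        + cs * γ⁻¹ * Real.sqrt (1 - vn ^ 2 - (‖v‖ ^ 2 - vn ^ 2) * cs ^ 2))
      / (1 - ‖v‖ ^ 2 * cs ^ 2)) :
    vn / (lam - vn) < -1 + γ ^ 2 * (1 + 1 / cs) := by
  obtain ⟨w, hw⟩ : ∃ x, ‖v‖ = x := ⟨_, rfl⟩
  rw [hw] at hv hγ hlam
  have hvnw : |vn| ≤ w := by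
    rw [hvn, ← hw]
    calc |⟪v, n⟫| ≤ ‖v‖ * ‖n‖ := abs_real_inner_le_norm v n
      _ = ‖v‖ := by rw [hn, mul_one]
  have hw0 : 0 ≤ w := hw ▸ norm_nonneg v
  have hvn2w : vn ^ 2 ≤ w ^ 2 := by nlinarith [abs_nonneg vn, sq_abs vn]
  have hw2 : w ^ 2 < 1 := by nlinarith
  have hg2 : (0:ℝ) < 1 - w ^ 2 := by linarith
  obtain ⟨g, hgdef⟩ : ∃ x, Real.sqrt (1 - w ^ 2) = x := ⟨_, rfl⟩
  have hg0 : 0 < g := hgdef ▸ Real.sqrt_pos.2 hg2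
  have hgsq : g ^ 2 = 1 - w ^ 2 := by rw [← hgdef]; exact Real.sq_sqrt hg2.le
  rw [hgdef] at hγ
  have hγinv : γ⁻¹ = g := by rw [hγ, one_div, inv_inv]
  -- sound speed facts
  have hΓ1' : (0:ℝ) < Γ - 1 := by linarith
  have hΓp : 0 < Γ * p := by positivity
  have hx0 : 0 < Γ * p / (ρ + Γ * p / (Γ - 1)) := by positivity
  have hx1 : Γ * p / (ρ + Γ * p / (Γ - 1)) < 1 := by
    rw [div_lt_one (by positivity)]
    have : Γ * p ≤ Γ * p / (Γ - 1) := by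
      rw [le_div_iff₀ hΓ1']
      nlinarith [mul_nonneg hΓp.le (by linarith : (0:ℝ) ≤ 2 - Γ)]
    linarith
  have hcs0 : 0 < cs := by rw [hcs]; exact Real.sqrt_pos.2 hx0
  have hcs2 : cs ^ 2 < 1 := by
    have : cs ^ 2 = Γ * p / (ρ + Γ * p / (Γ - 1)) := by rw [hcs]; exact Real.sq_sqrt hx0.le
    rw [this]; exact hx1
  -- the discriminant
  have hD0 : 0 < 1 - vn ^ 2 - (w ^ 2 - vn ^ 2) * cs ^ 2 := by
    nlinarith [mul_nonneg (sub_nonneg.2 hvn2w) (by linarith : (0:ℝ) ≤ 1 - cs ^ 2)]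
  obtain ⟨s, hsdef⟩ : ∃ x, Real.sqrt (1 - vn ^ 2 - (w ^ 2 - vn ^ 2) * cs ^ 2) = x := ⟨_, rfl⟩
  have hs0 : 0 < s := hsdef ▸ Real.sqrt_pos.2 hD0
  have hs2 : s ^ 2 = 1 - vn ^ 2 - (w ^ 2 - vn ^ 2) * cs ^ 2 := by
    rw [← hsdef]; exact Real.sq_sqrt hD0.le
  rw [hγinv, hsdef] at hlam
  have := aux_main w vn cs g s lam hv hvnw hcs0 hcs2 hg0 hgsq hs0 hs2 hlam
  rw [hγ]
  exact this
end

section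
/- Let Γ ∈ (1,2], ρ > 0, p > 0, H = 1 + Γp/((Γ-1)ρ), c_s^2 = Γp/(ρH) with 0 < c_s^2 ≤ Γ - 1. Then ((Γ/c_s^2)^2 - 2Γ/c_s^2 - (Γ/(Γ-1) - Γ/c_s^2)^2)·c_s^2 - 1 + c_s^2 = (Γ+1)/(Γ-1) + (1-2Γ)/(Γ-1)^2·c_s^2, and this quantity is strictly greater than (2-Γ)/(Γ-1) ≥ 0; in particular it is positive. -/
/-- Key algebraic identity and inequality for the PCP property of the HLL flux. -/
theorem hll_key_identity
    (Γ ρ p H cs2 : ℝ)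
    (hΓ1 : 1 < Γ) (hΓ2 : Γ ≤ 2) (hρ : 0 < ρ) (hp : 0 < p)
    (hH : H = 1 + Γ * p / ((Γ - 1) * ρ))
    (hcs2 : cs2 = Γ * p / (ρ * H))
    (hcs2pos : 0 < cs2) (hcs2le : cs2 ≤ Γ - 1) :
    ((Γ / cs2) ^ 2 - 2 * Γ / cs2 - (Γ / (Γ - 1) - Γ / cs2) ^ 2) * cs2 - 1 + cs2
      = (Γ + 1) / (Γ - 1) + (1 - 2 * Γ) / (Γ - 1) ^ 2 * cs2 ∧
    (2 - Γ) / (Γ - 1) < (Γ + 1) / (Γ - 1) + (1 - 2 * Γ) / (Γ - 1) ^ 2 * cs2 ∧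
    0 ≤ (2 - Γ) / (Γ - 1) := by
  have hΓ0 : (0:ℝ) < Γ - 1 := by linarith
  have hx : cs2 ≠ 0 := ne_of_gt hcs2pos
  have hH0 : 0 < H := by
    rw [hH]; positivity
  have hρH : ρ * H = ρ + Γ * p / (Γ - 1) := by
    rw [hH]; field_simp
  have hlt : cs2 < Γ - 1 := by
    rw [hcs2, div_lt_iff₀ (by positivity)]
    rw [hρH]
    have : Γ * p / (Γ - 1) * (Γ - 1) = Γ * p := by field_simp
    nlinarith [mul_pos hΓ0 hρ]
  refine ⟨by field_simp; ring, ?_, ?_⟩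
  · have heq : (Γ + 1) / (Γ - 1) + (1 - 2 * Γ) / (Γ - 1) ^ 2 * cs2 - (2 - Γ) / (Γ - 1)
        = ((2 * Γ - 1) * (Γ - 1 - cs2)) / (Γ - 1) ^ 2 := by
      field_simp; ring
    have hpos : 0 < ((2 * Γ - 1) * (Γ - 1 - cs2)) / (Γ - 1) ^ 2 :=
      div_pos (by nlinarith) (by positivity)
    linarith
  · apply div_nonneg <;> linarith
end

section
/- Let a^-, a^+, b^-, b^+ be real numbers with a^± > 0, and let λ^± be reals. Let σ_l ≤ 0, σ_r ≥ 0 with σ_r > σ_l, σ_r ≥ λ^±, and σ̂ ≥ σ_r. Suppose -b^- > -λ^-·a^- and -b^+ > -λ^+·a^+. Then -(σ_r b^- - σ_l b^+ + σ_l σ_r(a^+ - a^-))/(σ_r - σ_l) > -σ̂·a^-. -/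
/-!
Write `dᵐ = σr aᵐ - bᵐ` and `dᵖ = σr aᵖ - bᵖ`; the quasilinear bounds together with
`λ^± ≤ σr` make both positive. The negated HLL flux projection then equals
`(σr dᵐ - σl dᵖ) / (σr - σl) - σr aᵐ`, and the first term is a weighted average of the
positive defects (the weights `σr` and `-σl` are nonnegative with positive sum). Hence the
negated flux exceeds `-σr aᵐ ≥ -σ̂ aᵐ`.
-/

section

variable {K : Type*} [Field K] [LinearOrder K] [IsStrictOrderedRing K]

lemma sub_pos_of_neg_mul_lt_neg {lam σ a b : K} (hσ : lam ≤ σ) (ha : 0 ≤ a)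
    (hb : -lam * a < -b) : 0 < σ * a - b := by
  nlinarith [mul_le_mul_of_nonneg_right hσ ha]

lemma mul_add_mul_pos_of_add_pos {p q x y : K} (hp : 0 ≤ p) (hq : 0 ≤ q) (hpq : 0 < p + q)
    (hx : 0 < x) (hy : 0 < y) : 0 < p * x + q * y :=
  calc 0 < (p + q) * min x y := mul_pos hpq (lt_min hx hy)
    _ ≤ p * x + q * y := by
      nlinarith [mul_le_mul_of_nonneg_left (min_le_left x y) hp,
        mul_le_mul_of_nonneg_left (min_le_right x y) hq]

lemma neg_hll_flux_eq {am ap bm bp σl σr : K} (hlr : σl < σr) :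
    -((σr * bm - σl * bp + σl * σr * (ap - am)) / (σr - σl)) =
      (σr * (σr * am - bm) + -σl * (σr * ap - bp)) / (σr - σl) - σr * am := by
  have : σr - σl ≠ 0 := (sub_pos.2 hlr).ne'
  field_simp
  ring

end

/-- Abstract HLL flux PCP estimate: projections of the HLL flux onto a linear constraint
functional are controlled by the maximal wave speed. -/
theorem hll_projection_bound
    (am ap bm bp lamm lamp σl σr σhat : ℝ)
    (ham : 0 < am) (hap : 0 < ap)
    (hσl : σl ≤ 0) (hσr : 0 ≤ σr) (hlr : σl < σr)
    (hσrm : lamm ≤ σr) (hσrp : lamp ≤ σr) (hσhat : σr ≤ σhat)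
    (hbm : -lamm * am < -bm) (hbp : -lamp * ap < -bp) :
    -σhat * am < -((σr * bm - σl * bp + σl * σr * (ap - am)) / (σr - σl)) := by
  have hdm : 0 < σr * am - bm := sub_pos_of_neg_mul_lt_neg hσrm ham.le hbm
  have hdp : 0 < σr * ap - bp := sub_pos_of_neg_mul_lt_neg hσrp hap.le hbp
  have hwidth : 0 < σr - σl := sub_pos.2 hlr
  have haverage : 0 < (σr * (σr * am - bm) + -σl * (σr * ap - bp)) / (σr - σl) :=
    div_pos (mul_add_mul_pos_of_add_pos hσr (neg_nonneg.2 hσl) (by linarith) hdm hdp) hwidth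
  rw [neg_hll_flux_eq hlr]
  linarith [mul_le_mul_of_nonneg_right hσhat ham.le]
end
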